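/- Let S ⊆ ℤ^ω be an analytic set that is not Haar-null. Then for every b ∈ ω^ω there exist a compact set K ⊆ Π_{n∈ω}[0, b(n)] with μ_b(K) > 0 and t ∈ ℤ^ω such that K + t ⊆ S. -/

import Mathlib

open MeasureTheory Filter

noncomputable section

/-- A subset of `ℤ^ω` is universally measurable if it is measurable with respect to the
completion of every Borel probability measure on `ℤ^ω`. -/
def UnivMeasurable (U : Set (ℕ → ℤ)) : Prop :=
  ∀ μ : Measure (ℕ → ℤ), IsProbabilityMeasure μ → NullMeasurableSet U μ

/-- Christensen's notion: `S ⊆ ℤ^ω` is Haar-null if there are a universally measurable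
`U ⊇ S` and a Borel probability measure `μ` with `μ (U + g) = 0` for every `g ∈ ℤ^ω`. -/
def IsHaarNull (S : Set (ℕ → ℤ)) : Prop :=
  ∃ (U : Set (ℕ → ℤ)) (μ : Measure (ℕ → ℤ)),
    S ⊆ U ∧ UnivMeasurable U ∧ IsProbabilityMeasure μ ∧
    ∀ g : ℕ → ℤ, μ ((fun x => x + g) '' U) = 0

/-- Eventual domination `f ≤* g`: `f n ≤ g n` for all but finitely many `n`. -/
def EvLE (f g : ℕ → ℕ) : Prop := ∀ᶠ n in atTop, f n ≤ g n

/-- A dominating family in Baire space. -/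
def Dominating (S : Set (ℕ → ℕ)) : Prop := ∀ f : ℕ → ℕ, ∃ g ∈ S, EvLE f g

/-- `∏_{i<n} (b i + 1)`. -/
def basePow (b : ℕ → ℕ) (n : ℕ) : ℕ := ∏ i ∈ Finset.range n, (b i + 1)

/-- The digits of `x ∈ [0,1)` in the mixed-radix expansion with bases `b n + 1`;
the `n`-th digit is uniformly distributed on `{0, …, b n}`, and the digits are independent. -/
def digitMap (b : ℕ → ℕ) (x : ℝ) : ℕ → ℤ :=
  fun n => ⌊x * (basePow b (n + 1) : ℝ)⌋ - (b n + 1) * ⌊x * (basePow b n : ℝ)⌋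

/-- `μ_b`: the product probability measure on `ℤ^ω` whose `n`-th factor is the uniform
probability measure on `{0, 1, …, b n} ⊆ ℤ`, realized as the joint distribution of the
mixed-radix digits (with bases `b n + 1`) of a uniformly random point of `[0,1)`.
(Applied to an arbitrary set it gives the outer measure `μ_b^*`.) -/
def muB (b : ℕ → ℕ) : Measure (ℕ → ℤ) :=
  Measure.map (digitMap b) (volume.restrict (Set.Ico (0 : ℝ) 1))

end

/-!
An analytic set `A = f '' (ℕ → ℕ)` of outer measure `> c` under a finite Borel measure contains
a compact set `f '' Iic k` of measure `> c`: the bound `k` is chosen one coordinate at a time by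
continuity from below, and since `f '' Iic k` contains the intersection of the decreasing closed
sets `closure (f '' {x | ∀ i < n, x i ≤ k i})`, continuity from above passes the estimate to it.
In particular analytic sets are universally measurable, so as `S` is not Haar-null some translate
`S + g` has positive `μ_b`-measure. A compact `K ⊆ S + g` of positive measure, cut down to the
box `Π [0, b n]` that carries `μ_b`, is the required set, with `t = -g`.
-/

open Set Topology Function
open scoped ENNReal

def prefixLE (k : ℕ → ℕ) (n : ℕ) : Set (ℕ → ℕ) := {x | ∀ i < n, x i ≤ k i}

lemma prefixLE_zero (k : ℕ → ℕ) : prefixLE k 0 = univ := by simp [prefixLE]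

lemma antitone_prefixLE (k : ℕ → ℕ) : Antitone (prefixLE k) :=
  fun _ _ hmn _ hx i hi => hx i (hi.trans_le hmn)

lemma prefixLE_congr {k₁ k₂ : ℕ → ℕ} {n : ℕ} (h : ∀ i < n, k₁ i = k₂ i) :
    prefixLE k₁ n = prefixLE k₂ n := by
  ext x
  exact forall₂_congr fun i hi => by rw [h i hi]

lemma monotone_prefixLE_update (k : ℕ → ℕ) (n : ℕ) :
    Monotone fun m => prefixLE (update k n m) (n + 1) := by
  intro m₁ m₂ hm x hx i hi
  rcases Nat.lt_succ_iff_lt_or_eq.1 hi with hi | rfl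
  · simpa [hi.ne] using hx i (Nat.lt_succ_of_lt hi)
  · simpa using (by simpa using hx i hi : x i ≤ m₁).trans hm

lemma iUnion_prefixLE_update (k : ℕ → ℕ) (n : ℕ) :
    ⋃ m, prefixLE (update k n m) (n + 1) = prefixLE k n := by
  ext x
  simp only [mem_iUnion, prefixLE, mem_ofPred_eq, Nat.lt_succ_iff_lt_or_eq, or_imp, forall_and,
    forall_eq]
  constructor
  · rintro ⟨m, h, -⟩ i hi
    simpa [hi.ne] using h i hi
  · exact fun h => ⟨x n, fun i hi => by simpa [hi.ne] using h i hi, by simp⟩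

lemma isCompact_Iic_pi_nat {ι : Type*} (k : ι → ℕ) : IsCompact (Iic k) := by
  rw [← pi_univ_Iic]
  exact isCompact_univ_pi fun i => (finite_Iic (k i)).isCompact

section Capacitability

variable {X : Type*} {f : (ℕ → ℕ) → X}

section Measure

variable [MeasurableSpace X] {μ : Measure X} {c : ℝ≥0∞}

lemma exists_lt_measure_image_prefixLE_update {k : ℕ → ℕ} {n : ℕ}
    (h : c < μ (f '' prefixLE k n)) :
    ∃ m, c < μ (f '' prefixLE (update k n m) (n + 1)) := by
  have hmono : Monotone fun m => f '' prefixLE (update k n m) (n + 1) :=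
    fun _ _ hm => image_mono (monotone_prefixLE_update k n hm)
  rw [← iUnion_prefixLE_update k n, image_iUnion, hmono.measure_iUnion] at h
  exact lt_iSup_iff.1 h

lemma exists_forall_lt_measure_image_prefixLE (h : c < μ (range f)) :
    ∃ k, ∀ n, c < μ (f '' prefixLE k n) := by
  choose! next hnext using fun k n (h : c < μ (f '' prefixLE k n)) =>
    exists_lt_measure_image_prefixLE_update h
  -- `approx (n + 1)` only changes entry `n` of `approx n`, so its entries below `n` are final
  let approx : ℕ → ℕ → ℕ := fun n => Nat.rec 0 (fun n kn => update kn n (next kn n)) n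
  have approx_succ (n : ℕ) : approx (n + 1) = update (approx n) n (next (approx n) n) := rfl
  have approx_stable (n i : ℕ) (hi : i < n) : approx n i = approx (i + 1) i := by
    induction n with
    | zero => omega
    | succ n ih =>
      rcases Nat.lt_succ_iff_lt_or_eq.1 hi with hi | rfl
      · rw [approx_succ, update_of_ne hi.ne, ih hi]
      · rfl
  refine ⟨fun i => approx (i + 1) i, fun n => ?_⟩
  rw [prefixLE_congr fun i hi => (approx_stable n i hi).symm]
  induction n with
  | zero => rwa [prefixLE_zero, image_univ]
  | succ n ih => rw [approx_succ]; exact hnext _ _ ih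

end Measure

variable [TopologicalSpace X]

lemma exists_image_prefixLE_subset (hf : Continuous f) {k : ℕ → ℕ} {U : Set X} (hU : IsOpen U)
    (hkU : f '' Iic k ⊆ U) : ∃ n, f '' prefixLE k n ⊆ U := by
  by_contra! h
  choose x hx hxU using fun n => (by simpa [not_subset] using h n :
    ∃ x ∈ prefixLE k n, f x ∉ U)
  -- clipping `x n` at `k` keeps its first `n` entries and lands in the compact set `Iic k`
  obtain ⟨a, ha, φ, hφ, hlim⟩ :=
    (isCompact_Iic_pi_nat k).tendsto_subseq fun n => (inf_le_right : x n ⊓ k ≤ k)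
  have hxa : Tendsto (x ∘ φ) atTop (𝓝 a) := by
    refine tendsto_pi_nhds.2 fun i => (tendsto_pi_nhds.1 hlim i).congr' ?_
    filter_upwards [eventually_gt_atTop i] with j hj
    exact inf_eq_left.2 (hx (φ j) i (hj.trans_le hφ.le_apply))
  obtain ⟨j, hj⟩ := ((hf.tendsto a).comp hxa |>.eventually
    (hU.mem_nhds (hkU (mem_image_of_mem f ha)))).exists
  exact hxU _ hj

variable [T2Space X]

lemma iInter_closure_image_prefixLE_subset (hf : Continuous f) (k : ℕ → ℕ) :
    ⋂ n, closure (f '' prefixLE k n) ⊆ f '' Iic k := by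
  intro y hy
  by_contra hyk
  obtain ⟨U, V, hU, hV, hkU, hyV, hUV⟩ := SeparatedNhds.of_isCompact_isCompact
    ((isCompact_Iic_pi_nat k).image hf) isCompact_singleton (disjoint_singleton_right.2 hyk)
  obtain ⟨n, hn⟩ := exists_image_prefixLE_subset hf hU hkU
  exact (hUV.closure_left hV).ne_of_mem (closure_mono hn (mem_iInter.1 hy n)) (hyV rfl) rfl

variable [MeasurableSpace X] [OpensMeasurableSpace X] {μ : Measure X} [IsFiniteMeasure μ]
  {A : Set X}

theorem MeasureTheory.AnalyticSet.exists_isCompact_subset_lt_measure (hA : AnalyticSet A)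
    {c : ℝ≥0∞} (hc : c < μ A) : ∃ K ⊆ A, IsCompact K ∧ c < μ K := by
  obtain ⟨c', hcc', hc'A⟩ := exists_between hc
  rcases (by rwa [AnalyticSet] at hA : A = ∅ ∨ ∃ f : (ℕ → ℕ) → X, Continuous f ∧ range f = A)
    with rfl | ⟨f, hf, rfl⟩
  · simp at hc
  obtain ⟨k, hk⟩ := exists_forall_lt_measure_image_prefixLE hc'A
  refine ⟨f '' Iic k, image_subset_range _ _, (isCompact_Iic_pi_nat k).image hf, hcc'.trans_le ?_⟩
  have hanti : Antitone fun n => closure (f '' prefixLE k n) :=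
    fun _ _ hmn => closure_mono (image_mono (antitone_prefixLE k hmn))
  calc c' ≤ ⨅ n, μ (closure (f '' prefixLE k n)) :=
        le_iInf fun n => (hk n).le.trans (measure_mono subset_closure)
    _ = μ (⋂ n, closure (f '' prefixLE k n)) :=
        (hanti.measure_iInter (fun _ => isClosed_closure.measurableSet.nullMeasurableSet)
          ⟨0, measure_ne_top _ _⟩).symm
    _ ≤ μ (f '' Iic k) := measure_mono (iInter_closure_image_prefixLE_subset hf k)

theorem MeasureTheory.AnalyticSet.nullMeasurableSet (hA : AnalyticSet A) :
    NullMeasurableSet A μ := by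
  rcases eq_zero_or_pos (μ A) with h0 | hpos
  · exact .of_null h0
  obtain ⟨u, -, hu, hlim⟩ := exists_seq_strictMono_tendsto' hpos
  choose K hKA hK huK using fun n => hA.exists_isCompact_subset_lt_measure (hu n).2
  have hB : MeasurableSet (⋃ n, K n) := .iUnion fun n => (hK n).isClosed.measurableSet
  have hAB : μ A ≤ μ (⋃ n, K n) :=
    le_of_tendsto' hlim fun n => (huK n).le.trans (measure_mono (subset_iUnion K n))
  exact hB.nullMeasurableSet.congr (ae_eq_of_subset_of_measure_ge (iUnion_subset hKA) hAB
    hB.nullMeasurableSet (measure_ne_top μ A))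

end Capacitability

theorem floor_mul_sub_mul_floor_mem_Icc {R : Type*} [CommRing R] [LinearOrder R]
    [IsStrictOrderedRing R] [FloorRing R] (y : R) (m : ℕ) :
    ⌊y * (m + 1)⌋ - (m + 1) * ⌊y⌋ ∈ Icc (0 : ℤ) m := by
  have h₁ : ((m : ℤ) + 1) * ⌊y⌋ ≤ ⌊y * (m + 1)⌋ := by
    apply Int.le_floor.2
    push_cast
    nlinarith [Int.floor_le y, (Nat.cast_nonneg m : (0 : R) ≤ m)]
  have h₂ : ⌊y * (m + 1)⌋ < ((m : ℤ) + 1) * (⌊y⌋ + 1) := by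
    apply Int.floor_lt.2
    push_cast
    nlinarith [Int.lt_floor_add_one y, (Nat.cast_nonneg m : (0 : R) ≤ m)]
  constructor <;> linarith

lemma basePow_succ (b : ℕ → ℕ) (n : ℕ) : basePow b (n + 1) = basePow b n * (b n + 1) :=
  Finset.prod_range_succ _ n

lemma digitMap_mem_Icc (b : ℕ → ℕ) (x : ℝ) : digitMap b x ∈ Icc 0 fun n => (b n : ℤ) := by
  have digit_mem (n : ℕ) : digitMap b x n ∈ Icc 0 (b n : ℤ) := by
    have := floor_mul_sub_mul_floor_mem_Icc (x * basePow b n) (b n)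
    simp only [digitMap, basePow_succ]
    push_cast at this ⊢
    rwa [← mul_assoc]
  exact ⟨fun n => (digit_mem n).1, fun n => (digit_mem n).2⟩

lemma measurable_digitMap (b : ℕ → ℕ) : Measurable (digitMap b) := by
  unfold digitMap
  fun_prop

instance isProbabilityMeasure_muB (b : ℕ → ℕ) : IsProbabilityMeasure (muB b) := by
  have : IsProbabilityMeasure (volume.restrict (Ico (0 : ℝ) 1)) := ⟨by simp⟩
  exact Measure.isProbabilityMeasure_map (measurable_digitMap b).aemeasurable

lemma muB_compl_Icc (b : ℕ → ℕ) : muB b (Icc 0 fun n => (b n : ℤ))ᶜ = 0 := by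
  rw [muB, Measure.map_apply (measurable_digitMap b) isClosed_Icc.measurableSet.compl,
    preimage_compl, preimage_eq_univ_iff.2 (range_subset_iff.2 (digitMap_mem_Icc b)), compl_univ, measure_empty]

/-- If `S ⊆ ℤ^ω` is analytic and not Haar-null then for every `b ∈ ω^ω` there are a
compact `K ⊆ Π_n [0, b n]` with `μ_b K > 0` and a translation `t` with `K + t ⊆ S`. -/
theorem nonHaarNull_contains_translate_of_compact
    (S : Set (ℕ → ℤ)) (hS : MeasureTheory.AnalyticSet S) (hnull : ¬ IsHaarNull S)
    (b : ℕ → ℕ) :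
    ∃ (K : Set (ℕ → ℤ)) (t : ℕ → ℤ), IsCompact K ∧
      K ⊆ {g : ℕ → ℤ | ∀ n, 0 ≤ g n ∧ g n ≤ (b n : ℤ)} ∧
      0 < muB b K ∧ (fun x => x + t) '' K ⊆ S := by
  obtain ⟨g, hg⟩ : ∃ g, muB b ((· + g) '' S) ≠ 0 := by
    by_contra! h
    exact hnull ⟨S, muB b, subset_rfl, fun μ _ => hS.nullMeasurableSet, inferInstance, h⟩
  obtain ⟨K, hKS, hK, hKpos⟩ := (hS.image_of_continuous (continuous_add_const g)
    ).exists_isCompact_subset_lt_measure (pos_iff_ne_zero.2 hg)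
  refine ⟨K ∩ Icc 0 fun n => (b n : ℤ), -g, hK.inter_right isClosed_Icc,
    fun _ hx n => ⟨hx.2.1 n, hx.2.2 n⟩,
    by rwa [measure_inter_conull (muB_compl_Icc b)], ?_⟩
  rintro _ ⟨x, ⟨hx, -⟩, rfl⟩
  obtain ⟨s, hs, rfl⟩ := hKS hx
  simpa using hs
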